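/- Defining a_0 = 1 and a_{k+1} = 2^{a_k + 1} - 1, the FCF recurrence sets N_k satisfy {1, ..., a_k} ⊆ N_k for all k; hence producing FCF encodings of all integers below n requires only O(log* n) iterations, i.e., the least k with a_k ≥ n satisfies k ≤ C + log*(n) for a constant C. -/

import Mathlib

def FCF : ℕ → Finset ℕ
  | 0 => {1}
  | k + 1 =>
    ((insert 1 ((FCF k).image (2 ^ ·))).powerset.filter (fun S => S.Nonempty)).image
      (fun S => S.sum id)

def a : ℕ → ℕ
  | 0 => 1
  | k + 1 => 2 ^ (a k + 1) - 1

/-- The iterated logarithm: the least number of times log₂ must be applied to reach ≤ 1. -/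
noncomputable def logStar (n : ℕ) : ℕ := sInf {k : ℕ | Nat.log2^[k] n ≤ 1}

/-! Binary expansion: if `N ⊇ {1, …, m}`, every `1 ≤ n < 2 ^ (m + 1)` is a sum of distinct
powers `2 ^ i` with `i ∈ {0} ∪ N`, i.e. of elements of `{1} ∪ 2 ^ N`. So one FCF step turns the
interval `[1, m]` into `[1, 2 ^ (m + 1) - 1]`, which is the recursion defining `a`. Conversely
`n ≤ 2 ^ (log₂ n + 1) - 1`, so `log₂^[t] n ≤ 1 = a 0` forces `n ≤ a t`; with `t = log* n`
this gives the bound with `C = 0`. -/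

def fcfStep (N : Finset ℕ) : Finset ℕ :=
  ((insert 1 (N.image (2 ^ ·))).powerset.filter (fun S => S.Nonempty)).image (fun S => S.sum id)

theorem FCF_succ (k : ℕ) : FCF (k + 1) = fcfStep (FCF k) := rfl

theorem mem_fcfStep {N : Finset ℕ} {n : ℕ} :
    n ∈ fcfStep N ↔ ∃ S ⊆ insert 1 (N.image (2 ^ ·)), S.Nonempty ∧ S.sum id = n := by
  simp [fcfStep, and_assoc]

theorem Icc_one_two_pow_sub_one_subset_fcfStep {N : Finset ℕ} {m : ℕ}
    (hN : Finset.Icc 1 m ⊆ N) : Finset.Icc 1 (2 ^ (m + 1) - 1) ⊆ fcfStep N := by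
  intro n hn
  rw [Finset.mem_Icc] at hn
  set s := n.bitIndices.toFinset
  have hsum : ∑ i ∈ s, 2 ^ i = n := Finset.sum_toFinset_bitIndices_two_pow n
  have hs : s ⊆ insert 0 N := by
    intro i hi
    have hpow : 2 ^ i < 2 ^ (m + 1) :=
      (Nat.two_pow_le_of_mem_bitIndices (List.mem_toFinset.1 hi)).trans_lt (by omega)
    have hle : i ≤ m := Nat.lt_succ_iff.1 ((Nat.pow_lt_pow_iff_right (by norm_num)).1 hpow)
    rcases Nat.eq_zero_or_pos i with rfl | hpos
    · exact Finset.mem_insert_self 0 N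
    · exact Finset.mem_insert_of_mem (hN (Finset.mem_Icc.2 ⟨hpos, hle⟩))
  refine mem_fcfStep.2 ⟨s.image (2 ^ ·), ?_, ?_, ?_⟩
  · have := Finset.image_subset_image (f := (2 ^ ·)) hs
    rwa [Finset.image_insert, pow_zero] at this
  · exact (Finset.nonempty_of_sum_ne_zero (by omega : ∑ i ∈ s, 2 ^ i ≠ 0)).image _
  · rwa [Finset.sum_image fun _ _ _ _ h => Nat.pow_right_injective le_rfl h]

theorem Icc_one_a_subset_FCF (k : ℕ) : Finset.Icc 1 (a k) ⊆ FCF k := by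
  induction k with
  | zero => simp [a, FCF]
  | succ k ih => exact FCF_succ k ▸ Icc_one_two_pow_sub_one_subset_fcfStep ih

theorem iterate_self_le_one {f : ℕ → ℕ} (hf : ∀ x, f x ≤ 1 ∨ f x < x) (n : ℕ) :
    f^[n] n ≤ 1 := by
  suffices ∀ k, f^[k] n ≤ 1 ∨ f^[k] n + k ≤ n by
    have := this n
    omega
  intro k
  induction k with
  | zero => simp
  | succ k ih =>
    rw [Function.iterate_succ_apply']
    have := hf (f^[k] n)
    omega

theorem log2_iterate_logStar_le_one (n : ℕ) : Nat.log2^[logStar n] n ≤ 1 := by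
  refine Nat.sInf_mem (s := {k | Nat.log2^[k] n ≤ 1}) ⟨n, iterate_self_le_one (fun x => ?_) n⟩
  rcases Nat.eq_zero_or_pos x with rfl | hx
  · simp
  · exact .inr ((Nat.log2_lt hx.ne').2 (Nat.lt_two_pow_self))

theorem le_a_of_log2_iterate_le_one {t n : ℕ} (h : Nat.log2^[t] n ≤ 1) : n ≤ a t := by
  induction t generalizing n with
  | zero => exact h
  | succ t ih =>
    have hlog : n.log2 + 1 ≤ a t + 1 := Nat.succ_le_succ (ih h)
    have : 2 ^ (n.log2 + 1) ≤ 2 ^ (a t + 1) := Nat.pow_le_pow_right (by norm_num) hlog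
    have := @Nat.lt_log2_self n
    simp only [a]
    omega

theorem FCF_logstar_iterations :
    (∀ k : ℕ, Finset.Icc 1 (a k) ⊆ FCF k) ∧
    ∃ C : ℕ, ∀ n : ℕ, 1 ≤ n → sInf {k : ℕ | n ≤ a k} ≤ C + logStar n := by
  refine ⟨Icc_one_a_subset_FCF, 0, fun n _ => ?_⟩
  rw [zero_add]
  exact Nat.sInf_le (le_a_of_log2_iterate_le_one (log2_iterate_logStar_le_one n))
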